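/- arXiv:2303.00213 — 3 statements merged into one kernel-verified Lean document; each statement's English description precedes it below -/
import Mathlib

section
/- Let (C, E) be a complete hereditary cotorsion pair in the category of left R-modules, and let D be a subclass of C. Then D is a special precovering class if and only if every module in C has a special D-precover. -/
open CategoryTheory Limits

universe u

variable (R : Type u) [Ring R]

/-- `extVanish R n A B` means the `n`-th Ext group `Ext^n(A, B)` vanishes. -/
noncomputable def extVanish (n : ℕ) (A B : ModuleCat.{u} R) : Prop :=
  Subsingleton (((Ext ℤ (ModuleCat.{u} R) n).obj (Opposite.op A)).obj B)

/-- The right `Ext^1`-orthogonal class of a class of modules. -/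
def rightOrth (D : Set (ModuleCat.{u} R)) : Set (ModuleCat.{u} R) :=
  {M | ∀ D' ∈ D, extVanish R 1 D' M}

/-- The left `Ext^1`-orthogonal class of a class of modules. -/
def leftOrth (E : Set (ModuleCat.{u} R)) : Set (ModuleCat.{u} R) :=
  {M | ∀ E' ∈ E, extVanish R 1 M E'}

/-- `0 → A → B → C → 0` is a short exact sequence. -/
def IsShortExact {A B C : ModuleCat.{u} R} (f : A ⟶ B) (g : B ⟶ C) : Prop :=
  Function.Injective f ∧ Function.Surjective g ∧ Function.Exact f g

/-- `(𝒜, ℬ)` is a cotorsion pair: each class is the Ext¹-orthogonal of the other. -/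
def IsCotorsionPair (A B : Set (ModuleCat.{u} R)) : Prop :=
  A = leftOrth R B ∧ B = rightOrth R A

/-- Completeness of a cotorsion pair `(𝒜, ℬ)`. -/
def IsCompletePair (A B : Set (ModuleCat.{u} R)) : Prop :=
  (∀ M : ModuleCat.{u} R, ∃ (S C : ModuleCat.{u} R) (f : S ⟶ C) (g : C ⟶ M),
      S ∈ B ∧ C ∈ A ∧ IsShortExact R f g) ∧
  (∀ M : ModuleCat.{u} R, ∃ (E C : ModuleCat.{u} R) (f : M ⟶ E) (g : E ⟶ C),
      E ∈ B ∧ C ∈ A ∧ IsShortExact R f g)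

/-- Heredity of a pair: `Ext^i(A, B) = 0` for all `i ≥ 1`, `A ∈ 𝒜`, `B ∈ ℬ`. -/
def IsHereditaryPair (A B : Set (ModuleCat.{u} R)) : Prop :=
  ∀ n : ℕ, 1 ≤ n → ∀ A' ∈ A, ∀ B' ∈ B, extVanish R n A' B'

/-- `M` has a special `𝒟`-precover: a surjection `g : D → M` with `D ∈ 𝒟` and
`Ext¹(D', ker g) = 0` for all `D' ∈ 𝒟`. -/
def HasSpecialPrecover (D : Set (ModuleCat.{u} R)) (M : ModuleCat.{u} R) : Prop :=
  ∃ (G : ModuleCat.{u} R) (g : G ⟶ M), G ∈ D ∧ Function.Surjective g ∧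
    ∀ G' ∈ D, extVanish R 1 G' (ModuleCat.of R (LinearMap.ker g.hom))

/-- `𝒟` is a special precovering class. -/
def IsSpecialPrecovering (D : Set (ModuleCat.{u} R)) : Prop :=
  ∀ M : ModuleCat.{u} R, HasSpecialPrecover R D M

/-- The class of strongly FP-injective modules:
`Ext^i(T, M) = 0` for every finitely presented `T` and every `i ≥ 1`. -/
def SFPI : Set (ModuleCat.{u} R) :=
  {M | ∀ T : ModuleCat.{u} R, Module.FinitePresentation R T →
    ∀ n : ℕ, 1 ≤ n → extVanish R n T M}

/-- The class `𝒞 = ⊥(SFPI)` of weakly FP-projective modules. -/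
def WFP : Set (ModuleCat.{u} R) := leftOrth R (SFPI R)

/-- All components of the complex are projective modules. -/
def HasProjComponents (P : ChainComplex (ModuleCat.{u} R) ℤ) : Prop :=
  ∀ n : ℤ, Module.Projective R (P.X n)

/-- The complex is acyclic (exact). -/
def IsAcyclic (P : ChainComplex (ModuleCat.{u} R) ℤ) : Prop :=
  ∀ n : ℤ, P.ExactAt n

/-- The complex `Hom(P, Q)` is exact. -/
def HomIntoExact (P : ChainComplex (ModuleCat.{u} R) ℤ) (Q : ModuleCat.{u} R) : Prop :=
  ∀ (n : ℤ) (f : P.X n ⟶ Q), P.d (n + 1) n ≫ f = 0 →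
    ∃ g : P.X (n - 1) ⟶ Q, P.d n (n - 1) ≫ g = f

/-- `G` is Gorenstein projective: a cycle of a totally acyclic complex of projectives. -/
noncomputable def IsGorensteinProjective (G : ModuleCat.{u} R) : Prop :=
  ∃ P : ChainComplex (ModuleCat.{u} R) ℤ, HasProjComponents R P ∧ IsAcyclic R P ∧
    (∀ Q : ModuleCat.{u} R, Module.Projective R Q → HomIntoExact R P Q) ∧
    Nonempty (G ≅ P.cycles 0)

/-- `M` is a flat module (via the Lazard–Govorov criterion, valid over any ring:
every map from a finitely presented module into `M` factors through a
finitely generated free module). -/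
def IsFlatModule (M : ModuleCat.{u} R) : Prop :=
  ∀ (F : ModuleCat.{u} R), Module.FinitePresentation R F → ∀ f : F ⟶ M,
    ∃ (k : ℕ) (g : F ⟶ ModuleCat.of R (Fin k → R)) (h : ModuleCat.of R (Fin k → R) ⟶ M),
      g ≫ h = f

/-- `G` is Ding projective: a cycle of an exact complex of projectives which stays
exact under `Hom(-, F)` for every flat module `F`. -/
noncomputable def IsDingProjective (G : ModuleCat.{u} R) : Prop :=
  ∃ P : ChainComplex (ModuleCat.{u} R) ℤ, HasProjComponents R P ∧ IsAcyclic R P ∧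
    (∀ Q : ModuleCat.{u} R, IsFlatModule R Q → HomIntoExact R P Q) ∧
    Nonempty (G ≅ P.cycles 0)

/-- The class of Gorenstein projective modules. -/
noncomputable def GP : Set (ModuleCat.{u} R) := {M | IsGorensteinProjective R M}

/-- The class of Ding projective modules. -/
noncomputable def DP : Set (ModuleCat.{u} R) := {M | IsDingProjective R M}

/-- Gorenstein projective dimension at most `n`. -/
noncomputable def GpdLE : ℕ → ModuleCat.{u} R → Prop
  | 0, M => IsGorensteinProjective R M
  | n + 1, M => ∃ (K G : ModuleCat.{u} R) (i : K ⟶ G) (p : G ⟶ M),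
      IsGorensteinProjective R G ∧ IsShortExact R i p ∧ GpdLE n K

/-- Ding projective dimension at most `n`. -/
noncomputable def DpdLE : ℕ → ModuleCat.{u} R → Prop
  | 0, M => IsDingProjective R M
  | n + 1, M => ∃ (K G : ModuleCat.{u} R) (i : K ⟶ G) (p : G ⟶ M),
      IsDingProjective R G ∧ IsShortExact R i p ∧ DpdLE n K

/-- Projective dimension at most `n`. -/
def PdLE : ℕ → ModuleCat.{u} R → Prop
  | 0, M => Module.Projective R M
  | n + 1, M => ∃ (K G : ModuleCat.{u} R) (i : K ⟶ G) (p : G ⟶ M),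
      Module.Projective R G ∧ IsShortExact R i p ∧ PdLE n K

/-- `K` is a `j`-th syzygy of `M`: there is an exact sequence
`0 → K → P_{j-1} → ⋯ → P_0 → M → 0` with the `P_i` projective. -/
def IsSyzygy : ℕ → ModuleCat.{u} R → ModuleCat.{u} R → Prop
  | 0, K, M => Nonempty (K ≅ M)
  | j + 1, K, M => ∃ (K' P : ModuleCat.{u} R) (i : K' ⟶ P) (p : P ⟶ M),
      Module.Projective R P ∧ IsShortExact R i p ∧ IsSyzygy j K K'

/-! Given `M`, choose `0 → S → X → M → 0` with `X ∈ 𝒞`, `S ∈ ℰ`, and a special `𝒟`-precover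
`G → X`. The composite `G → M` is again a special `𝒟`-precover: its kernel is an extension of
`S` by the kernel of `G → X`, both lie in `𝒟^⊥` (`S` because `𝒟 ⊆ 𝒞 = ⊥ℰ`), and `𝒟^⊥` is closed
under extensions, as one sees by lifting cocycles on a projective resolution. -/

variable {R}

lemma extVanish_congr_right {n : ℕ} {A B B' : ModuleCat.{u} R} (e : B ≅ B') :
    extVanish R n A B ↔ extVanish R n A B' :=
  (((Ext ℤ (ModuleCat.{u} R) n).obj (Opposite.op A)).mapIso e).toLinearEquiv.toEquiv
    |>.subsingleton_congr

lemma extVanish_one_iff_of_projectiveResolution {A Y : ModuleCat.{u} R}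
    (P : ProjectiveResolution A) :
    extVanish R 1 A Y ↔ ∀ f : P.complex.X 1 ⟶ Y, P.complex.d 2 1 ≫ f = 0 →
      ∃ g : P.complex.X 0 ⟶ Y, P.complex.d 1 0 ≫ g = f := by
  rw [extVanish, ← ModuleCat.isZero_iff_subsingleton, (P.isoExt (R := ℤ) 1 Y).isZero_iff,
    ← HomologicalComplex.exactAt_iff_isZero_homology,
    HomologicalComplex.exactAt_iff' _ 0 1 2 (by simp) (by simp),
    ShortComplex.moduleCat_exact_iff]
  rfl

lemma IsShortExact.shortExact {X₁ X₂ X₃ : ModuleCat.{u} R} {f : X₁ ⟶ X₂} {g : X₂ ⟶ X₃}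
    (hfg : IsShortExact R f g) :
    (ShortComplex.mk f g (ModuleCat.hom_ext hfg.2.2.linearMap_comp_eq_zero)).ShortExact :=
  ModuleCat.shortComplex_shortExact _ hfg.2.2 hfg.1 hfg.2.1

noncomputable def IsShortExact.isoKer {X₁ X₂ X₃ : ModuleCat.{u} R} {f : X₁ ⟶ X₂} {g : X₂ ⟶ X₃}
    (hfg : IsShortExact R f g) : X₁ ≅ ModuleCat.of R (LinearMap.ker g.hom) :=
  ((LinearEquiv.ofInjective f.hom hfg.1).trans
    (LinearEquiv.ofEq _ _ hfg.2.2.linearMap_ker_eq.symm)).toModuleIso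

lemma extVanish_one_of_isShortExact {A X₁ X₂ X₃ : ModuleCat.{u} R} {f : X₁ ⟶ X₂} {g : X₂ ⟶ X₃}
    (hfg : IsShortExact R f g) (h₁ : extVanish R 1 A X₁) (h₃ : extVanish R 1 A X₃) :
    extVanish R 1 A X₂ := by
  have hS := hfg.shortExact
  have := hS.mono_f
  have := hS.epi_g
  obtain ⟨P⟩ := HasProjectiveResolution.out (Z := A)
  rw [extVanish_one_iff_of_projectiveResolution P] at h₁ h₃ ⊢
  intro c hc
  obtain ⟨b, hb⟩ := h₃ (c ≫ g) (by rw [← Category.assoc, hc, zero_comp])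
  set b' := Projective.factorThru b g
  have hw : (c - P.complex.d 1 0 ≫ b') ≫ g = 0 := by simp [b', hb]
  set k := hS.exact.lift _ hw
  have hk : P.complex.d 2 1 ≫ k = 0 := by
    rw [← cancel_mono f, Category.assoc, hS.exact.lift_f, zero_comp, Preadditive.comp_sub, hc,
      ← Category.assoc, HomologicalComplex.d_comp_d, zero_comp, sub_zero]
  obtain ⟨l, hl⟩ := h₁ k hk
  refine ⟨b' + l ≫ f, ?_⟩
  rw [Preadditive.comp_add, ← Category.assoc, hl, hS.exact.lift_f]
  abel

lemma isShortExact_ker_comp {G X M : ModuleCat.{u} R} (h : G ⟶ X) (g : X ⟶ M)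
    (hh : Function.Surjective h) :
    IsShortExact R
      (ModuleCat.ofHom (Submodule.inclusion (LinearMap.ker_le_ker_comp h.hom g.hom)) :
        ModuleCat.of R (LinearMap.ker h.hom) ⟶ ModuleCat.of R (LinearMap.ker (h ≫ g).hom))
      (ModuleCat.ofHom (h.hom.restrict fun _ hx ↦ hx) :
        ModuleCat.of R (LinearMap.ker (h ≫ g).hom) ⟶ ModuleCat.of R (LinearMap.ker g.hom)) := by
  refine ⟨Submodule.inclusion_injective (LinearMap.ker_le_ker_comp h.hom g.hom), fun y ↦ ?_,
    fun x ↦ ⟨fun hx ↦ ?_, ?_⟩⟩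
  · obtain ⟨x, hx⟩ := hh y
    exact ⟨⟨x, show g (h x) = 0 by rw [hx]; exact y.2⟩, Subtype.ext hx⟩
  · exact ⟨⟨x, congrArg Subtype.val hx⟩, rfl⟩
  · rintro ⟨y, rfl⟩
    exact Subtype.ext y.2

theorem hasSpecialPrecover_of_isShortExact {D : Set (ModuleCat.{u} R)} {S X M : ModuleCat.{u} R}
    {f : S ⟶ X} {g : X ⟶ M} (hfg : IsShortExact R f g) (hS : S ∈ rightOrth R D)
    (hX : HasSpecialPrecover R D X) : HasSpecialPrecover R D M := by
  obtain ⟨G, h, hG, hh, hker⟩ := hX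
  refine ⟨G, h ≫ g, hG, hfg.2.1.comp hh, fun G' hG' ↦ ?_⟩
  exact extVanish_one_of_isShortExact (isShortExact_ker_comp h g hh) (hker G' hG')
    ((extVanish_congr_right hfg.isoKer).1 (hS G' hG'))

theorem stmt0_general (C E D : Set (ModuleCat.{u} R))
    (hcp : IsCotorsionPair R C E) (hcomplete : IsCompletePair R C E)
    (hDC : D ⊆ C) :
    IsSpecialPrecovering R D ↔ ∀ M ∈ C, HasSpecialPrecover R D M := by
  refine ⟨fun hD M _ ↦ hD M, fun hD M ↦ ?_⟩
  obtain ⟨S, X, f, g, hS, hX, hfg⟩ := hcomplete.1 M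
  have hSD : S ∈ rightOrth R D := fun D' hD' ↦ (hcp.1 ▸ hDC hD') S hS
  exact hasSpecialPrecover_of_isShortExact hfg hSD (hD X hX)

/-- If `(𝒞, ℰ)` is a complete hereditary cotorsion pair and `𝒟 ⊆ 𝒞`, then
`𝒟` is special precovering iff every module in `𝒞` has a special `𝒟`-precover. -/
theorem stmt0 (C E D : Set (ModuleCat.{u} R))
    (hcp : IsCotorsionPair R C E) (hcomplete : IsCompletePair R C E)
    (hhered : IsHereditaryPair R C E) (hDC : D ⊆ C) :
    IsSpecialPrecovering R D ↔ ∀ M ∈ C, HasSpecialPrecover R D M :=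
  stmt0_general C E D hcp hcomplete hDC
end

section
/- If R is a left coherent ring, then the class of strongly FP-injective left R-modules coincides with the class of FP-injective left R-modules. -/
/-!
Dimension shifting. Over a left coherent ring a finitely generated submodule of `Rᵐ` is finitely
presented (induct on `m`: the first coordinate has a finitely generated left ideal as image, and
its kernel embeds in `Rᵐ⁻¹`). Hence a finitely presented `T` sits in `0 → K → Rᵐ → T → 0` with `K`
finitely presented, and `Ext^{n+2}(T, M) ≅ Ext^{n+1}(K, M)` since `Rᵐ` is projective. By induction
on `n`, `Ext¹(-, M) = 0` on finitely presented modules forces `Extⁿ(-, M) = 0` for all `n ≥ 1`.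
-/

open CategoryTheory Limits

universe u

variable (R : Type u) [Ring R]

/-- `R` is left coherent: every finitely generated left ideal is finitely presented. -/
def IsLeftCoherentRing : Prop :=
  ∀ I : Ideal R, I.FG → Module.FinitePresentation R I

/-- The class of FP-injective modules. -/
noncomputable def FPI : Set (ModuleCat.{u} R) :=
  {M | ∀ T : ModuleCat.{u} R, Module.FinitePresentation R T → extVanish R 1 T M}

namespace CategoryTheory

variable {C : Type*} [Category* C] [Abelian C]

namespace ShortComplex

lemma Exact.mk_comp_mono {X₁ X₂ X₃ X₄ : C} {f : X₁ ⟶ X₂} {g : X₂ ⟶ X₃} {w : f ≫ g = 0}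
    (h : (ShortComplex.mk f g w).Exact) (i : X₃ ⟶ X₄) [hi : Mono i] :
    (ShortComplex.mk f (g ≫ i) (by rw [reassoc_of% w, zero_comp])).Exact :=
  (exact_iff_of_epi_of_isIso_of_mono (S₁ := ShortComplex.mk f g w)
    (S₂ := ShortComplex.mk f (g ≫ i) _) { τ₁ := 𝟙 X₁, τ₂ := 𝟙 X₂, τ₃ := i }).1 h

lemma Exact.mk_epi_comp {X₀ X₁ X₂ X₃ : C} {f : X₁ ⟶ X₂} {g : X₂ ⟶ X₃} {w : f ≫ g = 0}
    (h : (ShortComplex.mk f g w).Exact) (p : X₀ ⟶ X₁) [hp : Epi p] :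
    (ShortComplex.mk (p ≫ f) g (by rw [Category.assoc, w, comp_zero])).Exact :=
  (exact_iff_of_epi_of_isIso_of_mono (S₁ := ShortComplex.mk (p ≫ f) g _)
    (S₂ := ShortComplex.mk f g w) { τ₁ := p, τ₂ := 𝟙 X₂, τ₃ := 𝟙 X₃ }).2 h

end ShortComplex

namespace ProjectiveResolution

variable {S : ShortComplex C}

noncomputable def ofShortExact (hS : S.ShortExact) [Projective S.X₂]
    (P : ProjectiveResolution S.X₁) : ProjectiveResolution S.X₃ where
  complex := P.complex.augment (P.π.f 0 ≫ S.f)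
    ((P.complex_d_comp_π_f_zero_assoc S.f).trans zero_comp)
  projective
    | 0 => (inferInstance : Projective S.X₂)
    | n + 1 => P.projective n
  π := (ChainComplex.toSingle₀Equiv _ _).symm
    ⟨S.g, (Category.assoc _ _ _).trans ((congrArg _ S.zero).trans comp_zero)⟩
  -- `P.π.f 0` lands in `((single₀ C).obj S.X₁).X 0`, which is `S.X₁` only up to unfolding;
  -- hence the `Epi`/`Mono` instances and some equations below are supplied by hand.
  quasiIso := ⟨fun n => by
    cases n with
    | zero =>
      rw [ChainComplex.quasiIsoAt₀_iff, ShortComplex.quasiIso_iff_of_zeros']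
      · refine (ShortComplex.exact_and_epi_g_iff_of_iso ?_).2
          ⟨hS.exact.mk_epi_comp (P.π.f 0) (hp := inferInstanceAs (Epi (P.π.f 0))), hS.epi_g⟩
        refine ShortComplex.isoMk (Iso.refl _) (Iso.refl _) (Iso.refl _) ?_ ?_
        · exact (Category.id_comp _).trans (Category.comp_id _).symm
        · exact (Category.id_comp _).trans ((Category.comp_id _).trans
            (ChainComplex.toSingle₀Equiv_symm_apply_f_zero
              (C := P.complex.augment _ _) (X := S.X₃) S.g _)).symm
      all_goals rfl
    | succ n =>
      rw [quasiIsoAt_iff_exactAt' _ _ (ChainComplex.exactAt_succ_single_obj _ _),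
        HomologicalComplex.exactAt_iff' _ (n + 2) (n + 1) n (by simp) (by simp)]
      cases n with
      | zero => exact P.exact₀.mk_comp_mono S.f (hi := hS.mono_f)
      | succ n => exact P.exact_succ n⟩

end ProjectiveResolution

namespace ShortComplex.ShortExact

variable [EnoughProjectives C] {k : Type*} [Ring k] [Linear k C] {S : ShortComplex C}

/- In degrees `≥ 1` the spliced resolution is `P.complex` shifted by one, so the two short
complexes computing the homologies below agree definitionally. -/
noncomputable def extSuccSuccIso (hS : S.ShortExact) [Projective S.X₂] (Y : C) (n : ℕ) :
    ((Ext k C (n + 2)).obj (Opposite.op S.X₃)).obj Y ≅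
      ((Ext k C (n + 1)).obj (Opposite.op S.X₁)).obj Y :=
  let P := ProjectiveResolution.of S.X₁
  (P.ofShortExact hS).isoExt (n + 2) Y ≪≫
    ((P.ofShortExact hS).complex.linearYonedaObj k Y).homologyIsoSc' (n + 1) (n + 2) (n + 3)
      (by simp) (by simp) ≪≫
    ((P.complex.linearYonedaObj k Y).homologyIsoSc' n (n + 1) (n + 2) (by simp) (by simp)).symm ≪≫
    (P.isoExt (n + 1) Y).symm

end ShortComplex.ShortExact

end CategoryTheory

namespace IsLeftCoherentRing

variable {R}

theorem finitePresentation_of_injective (hR : IsLeftCoherentRing R) {k : ℕ} {M : Type u}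
    [AddCommGroup M] [Module R M] [Module.Finite R M] {φ : M →ₗ[R] Fin k → R}
    (hφ : Function.Injective φ) : Module.FinitePresentation R M := by
  induction k generalizing M with
  | zero =>
    have : Subsingleton M := hφ.subsingleton
    infer_instance
  | succ k ih =>
    let f : M →ₗ[R] R := LinearMap.proj 0 ∘ₗ φ
    have : Module.FinitePresentation R (LinearMap.range f) :=
      hR _ (Module.Finite.iff_fg.mp (Module.Finite.range f))
    have : Module.Finite R (LinearMap.ker f.rangeRestrict) :=
      .of_fg (Module.FinitePresentation.fg_ker _ f.surjective_rangeRestrict)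
    have : Module.FinitePresentation R (LinearMap.ker f.rangeRestrict) := by
      refine ih (φ := LinearMap.funLeft R R Fin.succ ∘ₗ φ ∘ₗ (LinearMap.ker _).subtype) ?_
      intro x y hxy
      have hx : φ x 0 = 0 := Subtype.ext_iff.mp x.2
      have hy : φ y 0 = 0 := Subtype.ext_iff.mp y.2
      refine Subtype.ext (hφ (funext fun i => ?_))
      cases i using Fin.cases with
      | zero => exact hx.trans hy.symm
      | succ i => exact congrFun hxy i
    exact Module.finitePresentation_of_ker _ f.surjective_rangeRestrict

theorem finitePresentation_ker (hR : IsLeftCoherentRing R) {T : Type u} [AddCommGroup T]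
    [Module R T] [Module.FinitePresentation R T] {m : ℕ} {l : (Fin m → R) →ₗ[R] T}
    (hl : Function.Surjective l) : Module.FinitePresentation R (LinearMap.ker l) :=
  have : Module.Finite R (LinearMap.ker l) := .of_fg (Module.FinitePresentation.fg_ker l hl)
  hR.finitePresentation_of_injective (LinearMap.ker l).injective_subtype

theorem extVanish_succ_of_mem_FPI (hR : IsLeftCoherentRing R) {M : ModuleCat.{u} R}
    (hM : M ∈ FPI R) (n : ℕ) (T : ModuleCat.{u} R) (hT : Module.FinitePresentation R T) :
    extVanish R (n + 1) T M := by
  induction n generalizing T with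
  | zero => exact hM T hT
  | succ n ih =>
    obtain ⟨m, l, hl⟩ := Module.Finite.exists_fin' R T
    have hK := ih (ModuleCat.of R (LinearMap.ker l)) (hR.finitePresentation_ker hl)
    exact ((LinearMap.shortExact_shortComplexKer hl).extSuccSuccIso M n).toLinearEquiv.toEquiv
      |>.subsingleton_congr.mpr hK

end IsLeftCoherentRing

/-- Over a left coherent ring, strongly FP-injective = FP-injective. -/
theorem stmt2 (h : IsLeftCoherentRing R) : SFPI R = FPI R := by
  refine Set.Subset.antisymm (fun M hM T hT => hM T hT 1 le_rfl) fun M hM T hT n hn => ?_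
  obtain ⟨n, rfl⟩ := Nat.exists_eq_add_of_le' hn
  exact h.extVanish_succ_of_mem_FPI hM n T hT
end

section
/- In the pullback square arising from a special C-precover 0 → S → C → M → 0 (S ∈ E) and a special D-precover 0 → X → D → C → 0 (X ∈ D⊥, D ∈ D ⊆ C), the kernel V of the induced map D → M fits in an exact sequence 0 → X → V → S → 0 and satisfies Ext^1(D', V) = 0 for all D' ∈ D. -/
open CategoryTheory Limits

universe u

variable (R : Type u) [Ring R]

lemma extVanish_one_iff_lift (D' N : ModuleCat.{u} R) (P : ProjectiveResolution D') :
    extVanish R 1 D' N ↔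
      ∀ c : P.complex.X 1 ⟶ N, P.complex.d 2 1 ≫ c = 0 →
        ∃ e : P.complex.X 0 ⟶ N, P.complex.d 1 0 ≫ e = c := by
  rw [extVanish, ← ModuleCat.isZero_iff_subsingleton, (P.isoExt 1 N).isZero_iff,
    ← HomologicalComplex.exactAt_iff_isZero_homology,
    HomologicalComplex.exactAt_iff' _ 0 1 2 (by simp) (by simp),
    ShortComplex.moduleCat_exact_iff]
  rfl

/-- The classical argument: extend the image of a cocycle in `S`, lift the extension to `V`
through the projective `P₀`, and correct the difference, which lands in `X`. -/
lemma extVanish_one_of_isShortExact_s17 {D' X V S : ModuleCat.{u} R} {i : X ⟶ V} {q : V ⟶ S}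
    (hiq : IsShortExact R i q) (hX : extVanish R 1 D' X) (hS : extVanish R 1 D' S) :
    extVanish R 1 D' V := by
  obtain ⟨hi, hq, hexact⟩ := hiq
  have : Mono i := (ModuleCat.mono_iff_injective i).mpr hi
  have : Epi q := (ModuleCat.epi_iff_surjective q).mpr hq
  have hiq0 : i ≫ q = 0 := by ext x; exact (hexact _).mpr ⟨x, rfl⟩
  have hT : (ShortComplex.mk i q hiq0).Exact :=
    (ShortComplex.moduleCat_exact_iff _).mpr fun v hv => (hexact v).mp hv
  let P : ProjectiveResolution D' := (HasProjectiveResolution.out (Z := D')).some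
  rw [extVanish_one_iff_lift R D' X P] at hX
  rw [extVanish_one_iff_lift R D' S P] at hS
  rw [extVanish_one_iff_lift R D' V P]
  intro c hc
  obtain ⟨e, he⟩ := hS (c ≫ q) (by rw [← Category.assoc, hc, zero_comp])
  let h : P.complex.X 0 ⟶ V := Projective.factorThru e q
  have hdiff : (c - P.complex.d 1 0 ≫ h) ≫ q = 0 := by
    simp [h, he]
  let k := hT.lift (c - P.complex.d 1 0 ≫ h) hdiff
  have hki : k ≫ i = c - P.complex.d 1 0 ≫ h := hT.lift_f _ hdiff
  have hk : P.complex.d 2 1 ≫ k = 0 := by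
    rw [← cancel_mono i, Category.assoc, hki, zero_comp, Preadditive.comp_sub, hc,
      ← Category.assoc, HomologicalComplex.d_comp_d, zero_comp, sub_zero]
  obtain ⟨m, hm⟩ := hX k hk
  refine ⟨m ≫ i + h, ?_⟩
  rw [Preadditive.comp_add, ← Category.assoc, hm, hki, sub_add_cancel]

lemma rightOrth_anti {C D : Set (ModuleCat.{u} R)} (hDC : D ⊆ C) :
    rightOrth R C ⊆ rightOrth R D :=
  fun _ hN D' hD' => hN D' (hDC hD')

lemma mem_rightOrth_of_isShortExact {D : Set (ModuleCat.{u} R)} {X V S : ModuleCat.{u} R}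
    {i : X ⟶ V} {q : V ⟶ S} (hiq : IsShortExact R i q)
    (hX : X ∈ rightOrth R D) (hS : S ∈ rightOrth R D) : V ∈ rightOrth R D :=
  fun D' hD' => extVanish_one_of_isShortExact_s17 R hiq (hX D' hD') (hS D' hD')

/-- The kernel of `p ≫ g` is `p⁻¹(f S)`, the pullback of `f` along `p`; `q` is `f⁻¹ ∘ p` on it. -/
lemma isShortExact_ker_comp_s17 {X D₀ C₀ S M : ModuleCat.{u} R}
    {i : X ⟶ D₀} {p : D₀ ⟶ C₀} {f : S ⟶ C₀} {g : C₀ ⟶ M}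
    (hip : IsShortExact R i p) (hf : Function.Injective f) (hfg : Function.Exact f g) :
    ∃ (i' : X ⟶ ModuleCat.of R (LinearMap.ker (p ≫ g).hom))
      (q : ModuleCat.of R (LinearMap.ker (p ≫ g).hom) ⟶ S), IsShortExact R i' q := by
  obtain ⟨hi, hp, hexact⟩ := hip
  have hpi : ∀ x, p (i x) = 0 := fun x => (hexact _).mpr ⟨x, rfl⟩
  have hi_ker : ∀ x, i x ∈ LinearMap.ker (p ≫ g).hom := fun x => by
    change g (p (i x)) = 0
    rw [hpi, map_zero]
  have hp_range : ∀ v : LinearMap.ker (p ≫ g).hom, p v.1 ∈ LinearMap.range f.hom :=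
    fun v => (hfg _).mp v.2
  let ef := LinearEquiv.ofInjective f.hom hf
  let q : ModuleCat.of R (LinearMap.ker (p ≫ g).hom) ⟶ S := ModuleCat.ofHom <|
    ef.symm.toLinearMap ∘ₗ LinearMap.codRestrict _ (p.hom ∘ₗ Submodule.subtype _) hp_range
  have hfq : ∀ v, f (q v) = p v.1 := fun v =>
    congrArg Subtype.val (ef.apply_symm_apply ⟨p v.1, hp_range v⟩)
  refine ⟨ModuleCat.ofHom (LinearMap.codRestrict _ i.hom hi_ker), q, ?_, ?_, ?_⟩
  · exact fun a b hab => hi (congrArg Subtype.val hab)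
  · intro s
    obtain ⟨d, hd⟩ := hp (f s)
    have hd_ker : d ∈ LinearMap.ker (p ≫ g).hom := by
      change g (p d) = 0
      rw [hd]
      exact (hfg _).mpr ⟨s, rfl⟩
    exact ⟨⟨d, hd_ker⟩, hf (by rw [hfq, ← hd])⟩
  · intro v
    rw [← (injective_iff_map_eq_zero' f.hom).mp hf, hfq, hexact]
    exact ⟨fun ⟨x, hx⟩ => ⟨x, Subtype.ext hx⟩, fun ⟨x, hx⟩ => ⟨x, congrArg Subtype.val hx⟩⟩

theorem stmt17 (C E D : Set (ModuleCat.{u} R))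
    (hcp : IsCotorsionPair R C E) (hDC : D ⊆ C)
    (S C₀ M X D₀ : ModuleCat.{u} R)
    (f : S ⟶ C₀) (g : C₀ ⟶ M) (i : X ⟶ D₀) (p : D₀ ⟶ C₀)
    (hS : S ∈ E) (hse1 : IsShortExact R f g)
    (hX : X ∈ rightOrth R D) (hse2 : IsShortExact R i p) :
    (∃ (i' : X ⟶ ModuleCat.of R (LinearMap.ker (p ≫ g).hom))
        (q : ModuleCat.of R (LinearMap.ker (p ≫ g).hom) ⟶ S), IsShortExact R i' q) ∧
      ModuleCat.of R (LinearMap.ker (p ≫ g).hom) ∈ rightOrth R D := by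
  obtain ⟨i', q, hses⟩ := isShortExact_ker_comp_s17 R hse2 hse1.1 hse1.2.2
  have hS' : S ∈ rightOrth R D := rightOrth_anti R hDC (hcp.2 ▸ hS)
  exact ⟨⟨i', q, hses⟩, mem_rightOrth_of_isShortExact R hses hX hS'⟩
end
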